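/- arXiv:1709.07208 — 2 statements merged into one kernel-verified Lean document; each statement's English description precedes it below -/
import Mathlib

section
/- Let ν be a positive integer with ν ≡ 2 or 5 (mod 6). Then there exists a partial triple system PTS(ν,2) with exactly (2·C(ν,2) − 2)/3 triples whose leave is a doubled edge: there is one pair of vertices contained in no triple, while every other pair of vertices is contained in exactly two triples (counted with multiplicity). -/
/-- The function `g(ν, λ, s)` from the paper. -/
noncomputable def gfun (ν lam s : ℕ) : ℤ :=
  if ν ≤ 2 then 0
  else if (ν % 6 = 0 ∧ lam % 2 = 1) ∨
          (ν % 6 = 2 ∧ (lam % 6 = 1 ∨ lam % 6 = 3)) ∨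
          (ν % 6 = 2 ∧ lam % 6 = 5 ∧ s < ν / 2) ∨
          (ν % 6 = 4 ∧ lam % 2 = 1 ∧ s < ν / 2) then
    ⌊(lam : ℚ) / 3 * (ν.choose 2 : ℚ) - (ν : ℚ) / 6⌋
  else if (ν % 6 = 2 ∧ lam % 6 = 5 ∧ s = ν / 2) ∨
          (ν % 6 = 4 ∧ lam % 2 = 1 ∧ s = ν / 2) then
    ⌊(lam : ℚ) / 3 * (ν.choose 2 : ℚ) - (ν : ℚ) / 6⌋ - 1
  else if (ν % 6 = 2 ∧ lam % 6 = 4 ∧ s = 0) ∨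
          (ν % 6 = 5 ∧ lam % 3 = 1 ∧ s = 0) then
    ⌊(lam : ℚ) / 3 * (ν.choose 2 : ℚ)⌋ - 1
  else ⌊(lam : ℚ) / 3 * (ν.choose 2 : ℚ) - 2 * (s : ℚ) / 3⌋

/-- The function `f(n, ν, Δ₂)` from the paper. -/
noncomputable def ffun (n ν Δ : ℕ) : ℤ :=
  ⌊(ν : ℚ) * ((n : ℚ) - (ν : ℚ)) * (Δ : ℚ) / 2⌋ +
  if Even ((n - ν) * Δ) ∨ Even ν then gfun ν Δ 0 else gfun ν Δ (ν / 2)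

/-- The codegree of a pair `p` of vertices in a 3-multigraph `H`: the number of
triples of `H` (with multiplicity) containing `p`. -/
def codegPair {V : Type*} [DecidableEq V] (H : Multiset (Finset V)) (p : Finset V) : ℕ :=
  Multiset.card (H.filter fun t => p ⊆ t)

open Finset

section Helpers

variable {V : Type*} [DecidableEq V] {W : Type*} [DecidableEq W]

lemma codegPair_add (A B : Multiset (Finset V)) (p : Finset V) :
    codegPair (A + B) p = codegPair A p + codegPair B p := by
  simp [codegPair]

lemma codegPair_cons (t : Finset V) (s : Multiset (Finset V)) (p : Finset V) :
    codegPair (t ::ₘ s) p = (if p ⊆ t then 1 else 0) + codegPair s p := by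
  simp only [codegPair, Multiset.filter_cons]
  split <;> simp <;> omega

lemma codegPair_zero (p : Finset V) : codegPair (0 : Multiset (Finset V)) p = 0 := rfl

lemma codegPair_bind {α : Type*} (s : Multiset α) (f : α → Multiset (Finset V)) (p : Finset V) :
    codegPair (s.bind f) p = (s.map fun a => codegPair (f a) p).sum := by
  induction s using Multiset.induction_on with
  | empty => simp [codegPair]
  | cons a s ih => simp [Multiset.cons_bind, codegPair_add, ih]

lemma codegPair_univ_map {α : Type*} [Fintype α] [DecidableEq α] (T : α → Finset V) (p : Finset V) :
    codegPair ((univ : Finset α).val.map T) p = ((univ : Finset α).filter fun a => p ⊆ T a).card := by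
  rw [codegPair, Multiset.filter_map, Multiset.card_map]
  rfl

lemma codegPair_map_emb (f : W ↪ V) (H : Multiset (Finset W)) (p : Finset W) :
    codegPair (H.map (Finset.map f)) (p.map f) = codegPair H p := by
  rw [codegPair, codegPair, Multiset.filter_map, Multiset.card_map]
  congr 1
  apply Multiset.filter_congr
  intro t _
  exact Finset.map_subset_map

lemma codegPair_map_emb_zero (f : W ↪ V) (H : Multiset (Finset W)) (p : Finset V)
    (h : ∃ z ∈ p, ∀ w, f w ≠ z) : codegPair (H.map (Finset.map f)) p = 0 := by
  rw [codegPair, Multiset.card_eq_zero, Multiset.filter_eq_nil]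
  rintro t ht hsub
  obtain ⟨z, hz, hzf⟩ := h
  obtain ⟨t', _, rfl⟩ := Multiset.mem_map.mp ht
  obtain ⟨w, _, hw⟩ := Finset.mem_map.mp (hsub hz)
  exact hzf w hw

lemma pair_map (f : W ↪ V) (x y : W) :
    (({x, y} : Finset W).map f) = ({f x, f y} : Finset V) := by
  rw [Finset.map_insert, Finset.map_singleton]

def GoodOn (V : Type*) [DecidableEq V] : Prop :=
  ∃ H : Multiset (Finset V),
    (∀ t ∈ H, t.card = 3) ∧
    ∃ a b : V, a ≠ b ∧ codegPair H {a, b} = 0 ∧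
      ∀ x y : V, x ≠ y → ({x, y} : Finset V) ≠ {a, b} → codegPair H {x, y} = 2

lemma GoodOn.equiv (e : W ≃ V) (h : GoodOn W) : GoodOn V := by
  obtain ⟨H, h3, a, b, hab, h0, h2⟩ := h
  refine ⟨H.map (Finset.map e.toEmbedding), ?_, e a, e b, by simp [hab], ?_, ?_⟩
  · intro t ht
    obtain ⟨s, hs, rfl⟩ := Multiset.mem_map.mp ht
    simpa using h3 s hs
  · simp only [← Equiv.coe_toEmbedding, ← pair_map, codegPair_map_emb]
    exact h0
  · intro x y hxy hne
    have key := codegPair_map_emb e.toEmbedding H {e.symm x, e.symm y}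
    rw [pair_map] at key
    simp only [Equiv.coe_toEmbedding, Equiv.apply_symm_apply] at key
    rw [key]
    apply h2
    · intro hc; exact hxy (by simpa using congrArg e hc)
    · intro hc
      apply hne
      have := congrArg (Finset.map e.toEmbedding) hc
      rw [pair_map, pair_map] at this
      simpa using this

lemma sum_codeg [Fintype V] (H : Multiset (Finset V)) :
    ∑ p ∈ (univ : Finset V).powersetCard 2, codegPair H p
      = (H.map fun t => (t.powersetCard 2).card).sum := by
  induction H using Multiset.induction_on with
  | empty => simp [codegPair]
  | cons a s ih =>
      simp only [Multiset.map_cons, Multiset.sum_cons, ← ih]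
      rw [Finset.sum_congr rfl (fun p _ => codegPair_cons a s p), Finset.sum_add_distrib]
      congr 1
      rw [← Finset.card_filter]
      congr 1
      ext p
      simp only [Finset.mem_filter, Finset.mem_powersetCard, Finset.subset_univ, true_and]
      tauto

lemma card_from_spec [Fintype V] (H : Multiset (Finset V)) (h3 : ∀ t ∈ H, t.card = 3)
    (a b : V) (hab : a ≠ b) (h0 : codegPair H {a, b} = 0)
    (h2 : ∀ x y : V, x ≠ y → ({x, y} : Finset V) ≠ {a, b} → codegPair H {x, y} = 2) :
    Multiset.card H = (2 * (Fintype.card V).choose 2 - 2) / 3 := by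
  have key : ∑ p ∈ (univ : Finset V).powersetCard 2, codegPair H p = 3 * Multiset.card H := by
    rw [sum_codeg]
    have : H.map (fun t => (t.powersetCard 2).card) = H.map (fun _ => 3) := by
      apply Multiset.map_congr rfl
      intro t ht
      rw [Finset.card_powersetCard, h3 t ht]
      rfl
    rw [this, Multiset.map_const', Multiset.sum_replicate]
    simp [mul_comm]
  have hqmem : ({a, b} : Finset V) ∈ (univ : Finset V).powersetCard 2 := by
    rw [Finset.mem_powersetCard]
    exact ⟨Finset.subset_univ _, Finset.card_pair hab⟩
  have hsum : ∑ p ∈ (univ : Finset V).powersetCard 2, codegPair H p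
      = ∑ p ∈ ((univ : Finset V).powersetCard 2).erase {a, b}, codegPair H p := by
    rw [← Finset.add_sum_erase _ _ hqmem, h0, zero_add]
  have herase : ∀ p ∈ ((univ : Finset V).powersetCard 2).erase {a, b}, codegPair H p = 2 := by
    intro p hp
    have hpne := Finset.ne_of_mem_erase hp
    have hpmem := Finset.mem_of_mem_erase hp
    rw [Finset.mem_powersetCard] at hpmem
    obtain ⟨x, y, hxy, rfl⟩ := Finset.card_eq_two.mp hpmem.2
    exact h2 x y hxy hpne
  have hcard2 : ∑ p ∈ ((univ : Finset V).powersetCard 2).erase {a, b}, codegPair H p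
      = 2 * (((univ : Finset V).powersetCard 2).card - 1) := by
    rw [Finset.sum_congr rfl herase, Finset.sum_const, Finset.card_erase_of_mem hqmem]
    simp [mul_comm]
  have hC : ((univ : Finset V).powersetCard 2).card = (Fintype.card V).choose 2 := by
    rw [Finset.card_powersetCard, Finset.card_univ]
  have hpos : 1 ≤ ((univ : Finset V).powersetCard 2).card :=
    Finset.card_pos.mpr ⟨_, hqmem⟩
  rw [hsum, hcard2, hC] at key
  rw [hC] at hpos
  omega

end Helpers

section Step

variable {m : ℕ} [NeZero m]

def mixedT (ν m : ℕ) (x : Fin ν) (j u : ZMod m) : Finset (Fin ν ⊕ ZMod m) :=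
  {Sum.inl x, Sum.inr u, Sum.inr (u + j)}

def pureT (ν m : ℕ) (u : ZMod m) : Finset (Fin ν ⊕ ZMod m) :=
  {Sum.inr u, Sum.inr (u + 1), Sum.inr (u + 2)}

lemma castne (a : ℕ) (h0 : 0 < a) (hm : a < m) : ((a : ℕ) : ZMod m) ≠ 0 := by
  rw [Ne, ZMod.natCast_eq_zero_iff]
  intro hdvd
  exact absurd (Nat.le_of_dvd h0 hdvd) (by omega)

lemma cast_eq_iff_val {a : ℕ} (hm : a < m) (d : ZMod m) :
    ((a : ℕ) : ZMod m) = d ↔ a = d.val := by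
  constructor
  · intro h; rw [← h, ZMod.val_cast_of_lt hm]
  · rintro rfl; exact ZMod.natCast_zmod_val d

lemma card_filter_pair {α : Type*} [Fintype α] [DecidableEq α] {a b : α} (hab : a ≠ b)
    (P Q : Prop) [Decidable P] [Decidable Q] :
    ((Finset.univ : Finset α).filter fun u => (u = a ∧ P) ∨ (u = b ∧ Q)).card
      = (if P then 1 else 0) + (if Q then 1 else 0) := by
  by_cases hP : P <;> by_cases hQ : Q
  · have h : ((Finset.univ : Finset α).filter fun u => (u = a ∧ P) ∨ (u = b ∧ Q)) = {a, b} := by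
      ext u; simp [hP, hQ]
    rw [h, Finset.card_pair hab, if_pos hP, if_pos hQ]
  · have h : ((Finset.univ : Finset α).filter fun u => (u = a ∧ P) ∨ (u = b ∧ Q)) = {a} := by
      ext u; simp [hP, hQ]
    rw [h, Finset.card_singleton, if_pos hP, if_neg hQ]
  · have h : ((Finset.univ : Finset α).filter fun u => (u = a ∧ P) ∨ (u = b ∧ Q)) = {b} := by
      ext u; simp [hP, hQ]
    rw [h, Finset.card_singleton, if_neg hP, if_pos hQ]
  · have h : ((Finset.univ : Finset α).filter fun u => (u = a ∧ P) ∨ (u = b ∧ Q)) = ∅ := by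
      ext u; simp [hP, hQ]
    rw [h, Finset.card_empty, if_neg hP, if_neg hQ]

lemma card_filter_fin (ν : ℕ) (Q : ℕ → Prop) [DecidablePred Q] :
    ((Finset.univ : Finset (Fin ν)).filter fun x => Q x.val).card
      = ((Finset.range ν).filter Q).card := by
  rw [Finset.card_filter, Finset.card_filter,
    Fin.sum_univ_eq_sum_range (fun i => if Q i then 1 else 0)]

lemma count_A (ν c : ℕ) (hbound : ∀ x, x < ν → (x + c) / 2 < m) (d : ZMod m) :
    ((Finset.univ : Finset (Fin ν)).filter
        fun x => (((x.val + c) / 2 : ℕ) : ZMod m) = d).card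
      = min ν (2 * d.val + 2 - c) - (2 * d.val - c) := by
  rw [card_filter_fin ν (fun x => (((x + c) / 2 : ℕ) : ZMod m) = d)]
  have hset : (Finset.range ν).filter (fun x => (((x + c) / 2 : ℕ) : ZMod m) = d)
      = Finset.Ico (2 * d.val - c) (min ν (2 * d.val + 2 - c)) := by
    ext x
    simp only [Finset.mem_filter, Finset.mem_range, Finset.mem_Ico]
    constructor
    · rintro ⟨hx, hcast⟩
      have := (cast_eq_iff_val (hbound x hx) d).mp hcast
      omega
    · intro hx
      have hxν : x < ν := by omega
      refine ⟨hxν, (cast_eq_iff_val (hbound x hxν) d).mpr ?_⟩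
      omega
  rw [hset, Nat.card_Ico]

lemma step (ν : ℕ) (hm : 3 ≤ m) (A : Fin ν → ℕ)
    (hA1 : ∀ x, 0 < A x) (hA2 : ∀ x, A x < m) (pure : Bool)
    (hcover : ∀ (v d : ZMod m), d ≠ 0 →
      ((Finset.univ : Finset (Fin ν)).filter fun x => ((A x : ℕ) : ZMod m) = d).card
      + ((Finset.univ : Finset (Fin ν)).filter fun x => ((A x : ℕ) : ZMod m) = -d).card
      + (if pure then ((Finset.univ : Finset (ZMod m)).filter fun u =>
            ({Sum.inr v, Sum.inr (v + d)} : Finset (Fin ν ⊕ ZMod m)) ⊆ pureT ν m u).card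
         else 0) = 2)
    (hG : GoodOn (Fin ν)) : GoodOn (Fin ν ⊕ ZMod m) := by
  classical
  obtain ⟨H₀, h₀3, a, b, hab, hL, hC⟩ := hG
  set j : Fin ν → ZMod m := fun x => ((A x : ℕ) : ZMod m) with hjdef
  have hjne : ∀ x, j x ≠ 0 := fun x => castne _ (hA1 x) (hA2 x)
  set emb : Fin ν ↪ (Fin ν ⊕ ZMod m) := Function.Embedding.inl with hembdef
  set M1 : Multiset (Finset (Fin ν ⊕ ZMod m)) := H₀.map (Finset.map emb) with hM1def
  set M2 : Multiset (Finset (Fin ν ⊕ ZMod m)) :=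
    (Finset.univ : Finset (Fin ν)).val.bind
      (fun x => (Finset.univ : Finset (ZMod m)).val.map fun u => mixedT ν m x (j x) u) with hM2def
  set M3 : Multiset (Finset (Fin ν ⊕ ZMod m)) :=
    (if pure then (Finset.univ : Finset (ZMod m)).val.map (pureT ν m) else 0) with hM3def
  have hM2sum : ∀ p, codegPair M2 p
      = ∑ x : Fin ν, ((Finset.univ : Finset (ZMod m)).filter
          fun u => p ⊆ mixedT ν m x (j x) u).card := by
    intro p
    rw [hM2def, codegPair_bind,
      Multiset.map_congr rfl (fun x _ => codegPair_univ_map (fun u => mixedT ν m x (j x) u) p)]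
    rfl
  have hM3cross : ∀ p : Finset (Fin ν ⊕ ZMod m), (∃ z : Fin ν, Sum.inl z ∈ p) →
      codegPair M3 p = 0 := by
    rintro p ⟨z, hz⟩
    rw [hM3def]
    split
    · rw [codegPair_univ_map, Finset.card_eq_zero, Finset.filter_eq_empty_iff]
      intro u _ hsub
      have := hsub hz
      simp [pureT] at this
    · rfl
  have hM3new : ∀ v d : ZMod m, codegPair M3 {Sum.inr v, Sum.inr (v + d)}
      = (if pure then ((Finset.univ : Finset (ZMod m)).filter fun u =>
            ({Sum.inr v, Sum.inr (v + d)} : Finset (Fin ν ⊕ ZMod m)) ⊆ pureT ν m u).card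
         else 0) := by
    intro v d
    rw [hM3def]
    split
    · rw [codegPair_univ_map]
    · rfl
  have hM2old : ∀ s t : Fin ν, s ≠ t → codegPair M2 {Sum.inl s, Sum.inl t} = 0 := by
    intro s t hst
    rw [hM2sum]
    apply Finset.sum_eq_zero
    intro x _
    rw [Finset.card_eq_zero, Finset.filter_eq_empty_iff]
    intro u _
    simp only [mixedT, Finset.insert_subset_iff, Finset.singleton_subset_iff,
      Finset.mem_insert, Finset.mem_singleton, Sum.inl.injEq, reduceCtorEq, or_false, false_or]
    rintro ⟨rfl, rfl⟩
    exact hst rfl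
  have hM2cross : ∀ (x₀ : Fin ν) (w : ZMod m),
      codegPair M2 {Sum.inl x₀, Sum.inr w} = 2 := by
    intro x₀ w
    rw [hM2sum]
    have hterm : ∀ x : Fin ν, ((Finset.univ : Finset (ZMod m)).filter
        fun u => ({Sum.inl x₀, Sum.inr w} : Finset (Fin ν ⊕ ZMod m)) ⊆ mixedT ν m x (j x) u).card
        = if x = x₀ then 2 else 0 := by
      intro x
      by_cases hx : x = x₀
      · subst hx
        rw [if_pos rfl]
        have hset : ((Finset.univ : Finset (ZMod m)).filter
            fun u => ({Sum.inl x, Sum.inr w} : Finset (Fin ν ⊕ ZMod m)) ⊆ mixedT ν m x (j x) u)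
            = {w, w - j x} := by
          ext u
          simp only [Finset.mem_filter, Finset.mem_univ, true_and, mixedT,
            Finset.insert_subset_iff, Finset.singleton_subset_iff, Finset.mem_insert,
            Finset.mem_singleton, Sum.inl.injEq, Sum.inr.injEq, reduceCtorEq, or_false,
            false_or, true_and]
          constructor
          · rintro (h | h)
            · exact Or.inl h.symm
            · exact Or.inr (by linear_combination -h)
          · rintro (rfl | rfl)
            · exact Or.inl rfl
            · exact Or.inr (by ring)
        rw [hset, Finset.card_insert_of_notMem (by
          simp only [Finset.mem_singleton]
          intro h
          exact hjne x (by linear_combination h)), Finset.card_singleton]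
      · rw [if_neg hx, Finset.card_eq_zero, Finset.filter_eq_empty_iff]
        intro u _
        simp only [mixedT, Finset.insert_subset_iff, Finset.singleton_subset_iff,
          Finset.mem_insert, Finset.mem_singleton, Sum.inl.injEq, Sum.inr.injEq,
          reduceCtorEq, or_false, false_or]
        rintro ⟨rfl, _⟩
        exact hx rfl
    rw [Finset.sum_congr rfl (fun x _ => hterm x), Finset.sum_ite_eq' Finset.univ x₀ (fun _ => 2)]
    simp
  have hM2new : ∀ (v d : ZMod m), d ≠ 0 → codegPair M2 {Sum.inr v, Sum.inr (v + d)}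
      = ((Finset.univ : Finset (Fin ν)).filter fun x => j x = d).card
        + ((Finset.univ : Finset (Fin ν)).filter fun x => j x = -d).card := by
    intro v d hd
    rw [hM2sum]
    have hterm : ∀ x : Fin ν, ((Finset.univ : Finset (ZMod m)).filter
        fun u => ({Sum.inr v, Sum.inr (v + d)} : Finset (Fin ν ⊕ ZMod m)) ⊆ mixedT ν m x (j x) u).card
        = (if j x = d then 1 else 0) + (if j x = -d then 1 else 0) := by
      intro x
      have hiff : ∀ u : ZMod m, (({Sum.inr v, Sum.inr (v + d)} : Finset (Fin ν ⊕ ZMod m))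
          ⊆ mixedT ν m x (j x) u) ↔ ((u = v ∧ j x = d) ∨ (u = v + d ∧ j x = -d)) := by
        intro u
        simp only [mixedT, Finset.insert_subset_iff, Finset.singleton_subset_iff,
          Finset.mem_insert, Finset.mem_singleton, Sum.inr.injEq, reduceCtorEq, false_or]
        constructor
        · rintro ⟨h1 | h1, h2 | h2⟩
          · exact absurd (by linear_combination h2 - h1) hd
          · exact Or.inl ⟨h1.symm, by linear_combination h1 - h2⟩
          · exact Or.inr ⟨h2.symm, by linear_combination h2 - h1⟩
          · exact absurd (by linear_combination h2 - h1) hd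
        · rintro (⟨rfl, hj⟩ | ⟨rfl, hj⟩)
          · exact ⟨Or.inl rfl, Or.inr (by rw [hj])⟩
          · exact ⟨Or.inr (by rw [hj]; ring), Or.inl rfl⟩
      rw [Finset.filter_congr (fun u _ => hiff u),
        card_filter_pair (show v ≠ v + d from fun h => hd (by linear_combination -h)) _ _]
    rw [Finset.sum_congr rfl (fun x _ => hterm x), Finset.sum_add_distrib,
      ← Finset.card_filter, ← Finset.card_filter]
  have h1m : (1 : ZMod m) ≠ 0 := by
    have := castne (m := m) 1 one_pos (by omega); simpa using this
  have h2m : (2 : ZMod m) ≠ 0 := by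
    have := castne (m := m) 2 (by norm_num) (by omega); simpa using this
  have h21 : (2 : ZMod m) ≠ 1 := fun h => h1m (by linear_combination h)
  have hold_eq : ∀ s t : Fin ν, codegPair M1 {Sum.inl s, Sum.inl t} = codegPair H₀ {s, t} := by
    intro s t
    rw [hM1def, show ({Sum.inl s, Sum.inl t} : Finset (Fin ν ⊕ ZMod m))
      = ({s, t} : Finset (Fin ν)).map emb by rw [pair_map]; simp [hembdef], codegPair_map_emb]
  have hold_zero : ∀ p : Finset (Fin ν ⊕ ZMod m), (∃ z : ZMod m, Sum.inr z ∈ p) →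
      codegPair M1 p = 0 := by
    rintro p ⟨z, hz⟩
    exact codegPair_map_emb_zero emb H₀ p ⟨Sum.inr z, hz, fun w => by simp [hembdef]⟩
  refine ⟨M1 + M2 + M3, ?_, Sum.inl a, Sum.inl b, by simp [hab], ?_, ?_⟩
  · intro t ht
    rcases Multiset.mem_add.mp ht with h | h
    · rcases Multiset.mem_add.mp h with h | h
      · rw [hM1def] at h
        obtain ⟨s, hs, rfl⟩ := Multiset.mem_map.mp h
        rw [Finset.card_map]
        exact h₀3 s hs
      · rw [hM2def] at h
        obtain ⟨x, _, hmem⟩ := Multiset.mem_bind.mp h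
        obtain ⟨u, _, rfl⟩ := Multiset.mem_map.mp hmem
        rw [mixedT, Finset.card_insert_of_notMem (by simp),
          Finset.card_pair (by
            simp only [Ne, Sum.inr.injEq]
            intro h
            exact hjne x (left_eq_add.mp h))]
    · rw [hM3def] at h
      rcases pure with _ | _
      · simp at h
      · obtain ⟨u, _, rfl⟩ := Multiset.mem_map.mp h
        rw [pureT, Finset.card_insert_of_notMem (by
            simp only [Finset.mem_insert, Finset.mem_singleton, Sum.inr.injEq]
            rintro (h | h)
            · exact h1m (by linear_combination -h)
            · exact h2m (by linear_combination -h)),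
          Finset.card_pair (by
            simp only [Ne, Sum.inr.injEq]
            intro h
            exact h1m (by linear_combination -h))]
  · rw [codegPair_add, codegPair_add, hold_eq, hM2old a b hab,
      hM3cross _ ⟨a, by simp⟩, hL]
  · intro x y hxy hne
    rcases x with x' | v <;> rcases y with y' | w
    · have hxy' : x' ≠ y' := fun h => hxy (by rw [h])
      have hne' : ({x', y'} : Finset (Fin ν)) ≠ {a, b} := by
        intro hc
        apply hne
        have := congrArg (Finset.map emb) hc
        rw [pair_map, pair_map] at this
        simpa [hembdef] using this
      rw [codegPair_add, codegPair_add, hold_eq, hM2old x' y' hxy',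
        hM3cross _ ⟨x', by simp⟩, hC x' y' hxy' hne']
    · rw [codegPair_add, codegPair_add, hold_zero _ ⟨w, by simp⟩, hM2cross,
        hM3cross _ ⟨x', by simp⟩]
    · rw [Finset.pair_comm, codegPair_add, codegPair_add, hold_zero _ ⟨v, by simp⟩,
        hM2cross, hM3cross _ ⟨y', by simp⟩]
    · have hvw : v ≠ w := fun h => hxy (by rw [h])
      have hd : w - v ≠ 0 := sub_ne_zero.mpr (Ne.symm hvw)
      have hw : w = v + (w - v) := by ring
      rw [hw, codegPair_add, codegPair_add, hold_zero _ ⟨v, by simp⟩,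
        hM2new v (w - v) hd, hM3new v (w - v)]
      rw [zero_add]
      simp only [hjdef]
      exact hcover v (w - v) hd

end Step

section Counts

variable {m : ℕ} [NeZero m]

lemma pure_count (ν : ℕ) (hm : 6 ≤ m) (v d : ZMod m) (hd : d ≠ 0) :
    ((Finset.univ : Finset (ZMod m)).filter fun u =>
        ({Sum.inr v, Sum.inr (v + d)} : Finset (Fin ν ⊕ ZMod m)) ⊆ pureT ν m u).card
      = (if d.val = 1 then 2 else 0) + (if d.val = 2 then 1 else 0)
        + (if d.val = m - 1 then 2 else 0) + (if d.val = m - 2 then 1 else 0) := by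
  have h1m : (1 : ZMod m) ≠ 0 := by
    have := castne (m := m) 1 one_pos (by omega); simpa using this
  have h2m : (2 : ZMod m) ≠ 0 := by
    have := castne (m := m) 2 (by norm_num) (by omega); simpa using this
  have h3m : (3 : ZMod m) ≠ 0 := by
    have := castne (m := m) 3 (by norm_num) (by omega); simpa using this
  have h4m : (4 : ZMod m) ≠ 0 := by
    have := castne (m := m) 4 (by norm_num) (by omega); simpa using this
  have hcond : ∀ u : ZMod m, (({Sum.inr v, Sum.inr (v + d)} : Finset (Fin ν ⊕ ZMod m))
      ⊆ pureT ν m u) ↔ ((v = u ∨ v = u + 1 ∨ v = u + 2) ∧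
        (v + d = u ∨ v + d = u + 1 ∨ v + d = u + 2)) := by
    intro u
    simp [pureT, Finset.insert_subset_iff]
  have hdk : ((d.val : ℕ) : ZMod m) = d := ZMod.natCast_zmod_val d
  have hvlt : d.val < m := ZMod.val_lt d
  have hvpos : 0 < d.val := Nat.pos_of_ne_zero (fun h => hd ((ZMod.val_eq_zero d).mp h))
  have hcast1 : ((1 : ℕ) : ZMod m) = 1 := by push_cast; ring
  have hcast2 : ((2 : ℕ) : ZMod m) = 2 := by push_cast; ring
  have hcastm1 : ((m - 1 : ℕ) : ZMod m) = -1 := by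
    push_cast [Nat.cast_sub (show 1 ≤ m by omega)]
    simp [ZMod.natCast_self]
  have hcastm2 : ((m - 2 : ℕ) : ZMod m) = -2 := by
    push_cast [Nat.cast_sub (show 2 ≤ m by omega)]
    simp [ZMod.natCast_self]
  by_cases hk1 : d.val = 1
  · have hd1 : d = 1 := by rw [← hdk, hk1, Nat.cast_one]
    have hfil : ((Finset.univ : Finset (ZMod m)).filter fun u =>
        ({Sum.inr v, Sum.inr (v + d)} : Finset (Fin ν ⊕ ZMod m)) ⊆ pureT ν m u)
        = {v, v - 1} := by
      ext u
      simp only [Finset.mem_filter, Finset.mem_univ, true_and, Finset.mem_insert,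
        Finset.mem_singleton]
      rw [hcond u, hd1]
      constructor
      · rintro ⟨h1 | h1 | h1, h2 | h2 | h2⟩ <;>
          first
            | (left; first | linear_combination h1 | linear_combination -h1)
            | (right; first | linear_combination h1 | linear_combination -h1)
            | (exact absurd (show (1 : ZMod m) = 0 by
                first | linear_combination h1 - h2 | linear_combination h2 - h1) h1m)
            | (exact absurd (show (2 : ZMod m) = 0 by
                first | linear_combination h1 - h2 | linear_combination h2 - h1) h2m)
            | (exact absurd (show (3 : ZMod m) = 0 by
                first | linear_combination h1 - h2 | linear_combination h2 - h1) h3m)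
            | (exact absurd (show (4 : ZMod m) = 0 by
                first | linear_combination h1 - h2 | linear_combination h2 - h1) h4m)
      · rintro (rfl | rfl)
        · exact ⟨Or.inl rfl, Or.inr (Or.inl (by ring))⟩
        · exact ⟨Or.inr (Or.inl (by ring)), Or.inr (Or.inr (by ring))⟩
    rw [hfil, Finset.card_insert_of_notMem (by
        simp only [Finset.mem_singleton]
        intro h
        exact h1m (by linear_combination h)), Finset.card_singleton,
      if_pos hk1, if_neg (by omega), if_neg (by omega), if_neg (by omega)]
  · by_cases hk2 : d.val = 2
    · have hd2 : d = 2 := by rw [← hdk, hk2, hcast2]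
      have hfil : ((Finset.univ : Finset (ZMod m)).filter fun u =>
          ({Sum.inr v, Sum.inr (v + d)} : Finset (Fin ν ⊕ ZMod m)) ⊆ pureT ν m u)
          = {v} := by
        ext u
        simp only [Finset.mem_filter, Finset.mem_univ, true_and, Finset.mem_singleton]
        rw [hcond u, hd2]
        constructor
        · rintro ⟨h1 | h1 | h1, h2 | h2 | h2⟩ <;>
            first
              | (first | linear_combination h1 | linear_combination -h1)
              | (exact absurd (show (1 : ZMod m) = 0 by
                  first | linear_combination h1 - h2 | linear_combination h2 - h1) h1m)
              | (exact absurd (show (2 : ZMod m) = 0 by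
                  first | linear_combination h1 - h2 | linear_combination h2 - h1) h2m)
              | (exact absurd (show (3 : ZMod m) = 0 by
                  first | linear_combination h1 - h2 | linear_combination h2 - h1) h3m)
              | (exact absurd (show (4 : ZMod m) = 0 by
                  first | linear_combination h1 - h2 | linear_combination h2 - h1) h4m)
        · rintro rfl
          exact ⟨Or.inl rfl, Or.inr (Or.inr (by ring))⟩
      rw [hfil, Finset.card_singleton, if_neg hk1, if_pos hk2, if_neg (by omega),
        if_neg (by omega)]
    · by_cases hkm1 : d.val = m - 1
      · have hdm1 : d = -1 := by rw [← hdk, hkm1, hcastm1]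
        have hfil : ((Finset.univ : Finset (ZMod m)).filter fun u =>
            ({Sum.inr v, Sum.inr (v + d)} : Finset (Fin ν ⊕ ZMod m)) ⊆ pureT ν m u)
            = {v - 1, v - 2} := by
          ext u
          simp only [Finset.mem_filter, Finset.mem_univ, true_and, Finset.mem_insert,
            Finset.mem_singleton]
          rw [hcond u, hdm1]
          constructor
          · rintro ⟨h1 | h1 | h1, h2 | h2 | h2⟩ <;>
              first
                | (left; first | linear_combination h1 | linear_combination -h1)
                | (right; first | linear_combination h1 | linear_combination -h1)
                | (exact absurd (show (1 : ZMod m) = 0 by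
                    first | linear_combination h1 - h2 | linear_combination h2 - h1) h1m)
                | (exact absurd (show (2 : ZMod m) = 0 by
                    first | linear_combination h1 - h2 | linear_combination h2 - h1) h2m)
                | (exact absurd (show (3 : ZMod m) = 0 by
                    first | linear_combination h1 - h2 | linear_combination h2 - h1) h3m)
                | (exact absurd (show (4 : ZMod m) = 0 by
                    first | linear_combination h1 - h2 | linear_combination h2 - h1) h4m)
          · rintro (rfl | rfl)
            · exact ⟨Or.inr (Or.inl (by ring)), Or.inl (by ring)⟩
            · exact ⟨Or.inr (Or.inr (by ring)), Or.inr (Or.inl (by ring))⟩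
        rw [hfil, Finset.card_insert_of_notMem (by
            simp only [Finset.mem_singleton]
            intro h
            exact h1m (by linear_combination h)), Finset.card_singleton,
          if_neg hk1, if_neg hk2, if_pos hkm1, if_neg (by omega)]
      · by_cases hkm2 : d.val = m - 2
        · have hdm2 : d = -2 := by rw [← hdk, hkm2, hcastm2]
          have hfil : ((Finset.univ : Finset (ZMod m)).filter fun u =>
              ({Sum.inr v, Sum.inr (v + d)} : Finset (Fin ν ⊕ ZMod m)) ⊆ pureT ν m u)
              = {v - 2} := by
            ext u
            simp only [Finset.mem_filter, Finset.mem_univ, true_and, Finset.mem_singleton]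
            rw [hcond u, hdm2]
            constructor
            · rintro ⟨h1 | h1 | h1, h2 | h2 | h2⟩ <;>
                first
                  | (first | linear_combination h1 | linear_combination -h1)
                  | (exact absurd (show (1 : ZMod m) = 0 by
                      first | linear_combination h1 - h2 | linear_combination h2 - h1) h1m)
                  | (exact absurd (show (2 : ZMod m) = 0 by
                      first | linear_combination h1 - h2 | linear_combination h2 - h1) h2m)
                  | (exact absurd (show (3 : ZMod m) = 0 by
                      first | linear_combination h1 - h2 | linear_combination h2 - h1) h3m)
                  | (exact absurd (show (4 : ZMod m) = 0 by
                      first | linear_combination h1 - h2 | linear_combination h2 - h1) h4m)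
            · rintro rfl
              exact ⟨Or.inr (Or.inr (by ring)), Or.inl (by ring)⟩
          rw [hfil, Finset.card_singleton, if_neg hk1, if_neg hk2, if_neg hkm1,
            if_pos hkm2]
        · have hd1' : d ≠ 1 := fun h => hk1 (by rw [h, ← hcast1, ZMod.val_cast_of_lt (by omega)])
          have hd2' : d ≠ 2 := fun h => hk2 (by rw [h, ← hcast2, ZMod.val_cast_of_lt (by omega)])
          have hdm1' : d ≠ -1 := fun h =>
            hkm1 (by rw [h, ← hcastm1, ZMod.val_cast_of_lt (by omega)])
          have hdm2' : d ≠ -2 := fun h =>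
            hkm2 (by rw [h, ← hcastm2, ZMod.val_cast_of_lt (by omega)])
          have hfil : ((Finset.univ : Finset (ZMod m)).filter fun u =>
              ({Sum.inr v, Sum.inr (v + d)} : Finset (Fin ν ⊕ ZMod m)) ⊆ pureT ν m u)
              = ∅ := by
            rw [Finset.filter_eq_empty_iff]
            intro u _
            rw [hcond u]
            rintro ⟨h1 | h1 | h1, h2 | h2 | h2⟩ <;>
              first
                | exact hd (by linear_combination h2 - h1)
                | exact hd (by linear_combination h1 - h2)
                | exact hd1' (by linear_combination h2 - h1)
                | exact hd1' (by linear_combination h1 - h2)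
                | exact hd2' (by linear_combination h2 - h1)
                | exact hd2' (by linear_combination h1 - h2)
                | exact hdm1' (by linear_combination h2 - h1)
                | exact hdm1' (by linear_combination h1 - h2)
                | exact hdm2' (by linear_combination h2 - h1)
                | exact hdm2' (by linear_combination h1 - h2)
          rw [hfil, Finset.card_empty, if_neg hk1, if_neg hk2, if_neg hkm1, if_neg hkm2]

end Counts

section Steps

lemma step_odd (m : ℕ) (hm : 3 ≤ m) (hG : GoodOn (Fin (m - 1))) :
    GoodOn (Fin (m - 1) ⊕ ZMod m) := by
  haveI : NeZero m := ⟨by omega⟩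
  apply step (m := m) (ν := m - 1) hm (fun x => (x.val + 2) / 2)
    (fun x => by show 0 < (x.val + 2) / 2; omega)
    (fun x => by show (x.val + 2) / 2 < m; have := x.isLt; omega) false ?_ hG
  intro v d hd
  have hv : d.val < m := ZMod.val_lt d
  have hv0 : 0 < d.val := Nat.pos_of_ne_zero (fun h => hd ((ZMod.val_eq_zero d).mp h))
  have hneg : (-d).val = m - d.val := by rw [ZMod.neg_val, if_neg hd]
  rw [count_A (m - 1) 2 (by intro x hx; omega) d,
    count_A (m - 1) 2 (by intro x hx; omega) (-d), hneg]
  simp only [Bool.false_eq_true, if_false]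
  omega

lemma step_even (m : ℕ) (hm : 6 ≤ m) (hG : GoodOn (Fin (m - 4))) :
    GoodOn (Fin (m - 4) ⊕ ZMod m) := by
  haveI : NeZero m := ⟨by omega⟩
  apply step (m := m) (ν := m - 4) (by omega) (fun x => (x.val + 5) / 2)
    (fun x => by show 0 < (x.val + 5) / 2; omega)
    (fun x => by show (x.val + 5) / 2 < m; have := x.isLt; omega) true ?_ hG
  intro v d hd
  have hv : d.val < m := ZMod.val_lt d
  have hv0 : 0 < d.val := Nat.pos_of_ne_zero (fun h => hd ((ZMod.val_eq_zero d).mp h))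
  have hneg : (-d).val = m - d.val := by rw [ZMod.neg_val, if_neg hd]
  rw [count_A (m - 4) 5 (by intro x hx; omega) d,
    count_A (m - 4) 5 (by intro x hx; omega) (-d), hneg, if_pos rfl,
    pure_count (m - 4) hm v d hd]
  split_ifs <;> omega

noncomputable def sumEquiv (ν' m n : ℕ) (hm : 0 < m) (h : ν' + m = n) :
    (Fin ν' ⊕ ZMod m) ≃ Fin n :=
  haveI : NeZero m := ⟨by omega⟩
  ((Equiv.refl (Fin ν')).sumCongr (Fintype.equivFinOfCardEq (ZMod.card m))).trans
    (finSumFinEquiv.trans (finCongr h))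

lemma good_fin : ∀ ν : ℕ, 2 ≤ ν → ν % 3 = 2 → GoodOn (Fin ν) := by
  intro ν
  induction ν using Nat.strong_induction_on with
  | _ ν IH =>
    intro h2 h3
    by_cases hbase : ν = 2
    · subst hbase
      refine ⟨0, by simp, 0, 1, by decide, rfl, ?_⟩
      intro x y hxy hne
      exact absurd ((by decide :
        ∀ x y : Fin 2, x ≠ y → ({x, y} : Finset (Fin 2)) = {0, 1}) x y hxy) hne
    · have h5 : 5 ≤ ν := by omega
      by_cases hpar : ν % 2 = 1
      · have hg : GoodOn (Fin ((ν / 2 + 1) - 1)) :=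
          IH ((ν / 2 + 1) - 1) (by omega) (by omega) (by omega)
        have hstep := step_odd (ν / 2 + 1) (by omega) hg
        exact hstep.equiv (sumEquiv _ _ _ (by omega) (by omega))
      · have h8 : 8 ≤ ν := by omega
        have hg : GoodOn (Fin ((ν / 2 + 2) - 4)) :=
          IH ((ν / 2 + 2) - 4) (by omega) (by omega) (by omega)
        have hstep := step_even (ν / 2 + 2) (by omega) hg
        exact hstep.equiv (sumEquiv _ _ _ (by omega) (by omega))

end Steps

/-- for `ν ≡ 2, 5 (mod 6)` there is a `PTS(ν, 2)` with exactly
`(2·C(ν,2) − 2)/3` triples whose leave is a doubled edge. -/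
theorem stmt_11 (ν : ℕ) (hpos : 0 < ν) (hmod : ν % 6 = 2 ∨ ν % 6 = 5) :
    ∃ H : Multiset (Finset (Fin ν)),
      (∀ t ∈ H, t.card = 3) ∧
      (∀ x y : Fin ν, x ≠ y → codegPair H {x, y} ≤ 2) ∧
      Multiset.card H = (2 * ν.choose 2 - 2) / 3 ∧
      ∃ a b : Fin ν, a ≠ b ∧
        codegPair H {a, b} = 0 ∧
        (∀ x y : Fin ν, x ≠ y → ({x, y} : Finset (Fin ν)) ≠ {a, b} →
          codegPair H {x, y} = 2) := by
  have h3 : ν % 3 = 2 := by omega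
  have h2 : 2 ≤ ν := by omega
  obtain ⟨H, hc3, a, b, hab, h0, hcov⟩ := good_fin ν h2 h3
  refine ⟨H, hc3, ?_, ?_, a, b, hab, h0, hcov⟩
  · intro x y hxy
    by_cases hp : ({x, y} : Finset (Fin ν)) = {a, b}
    · rw [hp, h0]; omega
    · rw [hcov x y hxy hp]
  · have := card_from_spec H hc3 a b hab h0 hcov
    rwa [Fintype.card_fin] at this
end

section
/- Let ν ≡ 2 (mod 6) be an integer with ν ≥ 8. Then there exists a partial triple system PTS(ν,6) with exactly (6·C(ν,2) − ν − 1)/3 triples whose leave contains ν/2 pairwise disjoint edges, i.e., there exist ν/2 pairwise disjoint pairs of vertices each contained in fewer than 6 triples (counted with multiplicity). -/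
/-!
Write `ν = 6k + 2` and take the vertices `ℤ/(6k+1) ∪ {∞}`. The numbers `1, …, 3k` represent
the classes `±d` of nonzero differences once each, and since `2` is invertible so do their
doubles. Hence the translates of `{0, a, 2a}`, `2 ≤ a ≤ 3k`, each taken twice, cover a pair
`{p, p + d}` at most `6` times, at most twice when `d = ±1` and at most four times when
`d = ±2`. Adding all consecutive triples `{i, i+1, i+2}` and all triples `{∞, i, i+1}`,
`{∞, i, i+2}` gives codegree at most `5` at distance `1` and at most `6` at distance `2`, while
`∞` has codegree `4` with every vertex. For the `2k` gaps `i = 1, 4, …, 6k - 2` the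
consecutive triple `{i, i+1, i+2}` is then traded for the three triples joining `∞` to its
edges: the codegrees inside `ℤ/(6k+1)` do not change, that of `∞` with each vertex of the
triple grows by `2`, to at most `6` because gaps are three apart, and each trade adds two
triples, which gives the required count. All pairs `{p, p+1}` lie in the leave, and so does
`{∞, 0}`, as `0` lies in none of the traded triples.
-/

open Finset Pointwise

section Codegree

variable {V W : Type*} [DecidableEq W]

lemma codegPair_eq_countP (H : Multiset (Finset W)) (s : Finset W) :
    codegPair H s = H.countP (s ⊆ ·) :=
  (Multiset.countP_eq_card_filter _ _).symm

lemma codegPair_add_s17 (H H' : Multiset (Finset W)) (s : Finset W) :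
    codegPair (H + H') s = codegPair H s + codegPair H' s := by
  simp only [codegPair_eq_countP, Multiset.countP_add]

lemma codegPair_sum {ι : Type*} (A : Finset ι) (H : ι → Multiset (Finset W)) (s : Finset W) :
    codegPair (∑ a ∈ A, H a) s = ∑ a ∈ A, codegPair (H a) s := by
  simp only [codegPair_eq_countP]
  exact map_sum (Multiset.countPAddMonoidHom (s ⊆ ·)) H A

lemma codegPair_nsmul_singleton (m : ℕ) (t s : Finset W) :
    codegPair (m • {t}) s = if s ⊆ t then m else 0 := by
  rw [codegPair_eq_countP, Multiset.countP_nsmul, ← Multiset.cons_zero, Multiset.countP_cons]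
  split_ifs <;> simp

lemma codegPair_map_eq_zero {f : Finset V → Finset W} {s : Finset W} (h : ∀ t, ¬s ⊆ f t)
    (H : Multiset (Finset V)) : codegPair (H.map f) s = 0 := by
  simp [codegPair_eq_countP, Multiset.countP_map, h]

variable [DecidableEq V]

lemma codegPair_map {f : Finset V → Finset W} {s : Finset W} {s' : Finset V}
    (h : ∀ t, s ⊆ f t ↔ s' ⊆ t) (H : Multiset (Finset V)) :
    codegPair (H.map f) s = codegPair H s' := by
  simp only [codegPair_eq_countP, Multiset.countP_map, h]
  exact (Multiset.countP_eq_card_filter _ _).symm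

lemma codegPair_map_equiv (e : V ≃ W) (H : Multiset (Finset V)) (s : Finset V) :
    codegPair (H.map (map e.toEmbedding)) (s.map e.toEmbedding) = codegPair H s :=
  codegPair_map (fun _ => map_subset_map) H

end Codegree

section PartialTripleSystem

variable {V W : Type*} [DecidableEq V] [DecidableEq W]

def IsPartialTripleSystem (lam : ℕ) (H : Multiset (Finset V)) : Prop :=
  (∀ t ∈ H, t.card = 3) ∧ ∀ x y : V, x ≠ y → codegPair H {x, y} ≤ lam

def HasLeaveMatching (lam m : ℕ) (H : Multiset (Finset V)) : Prop :=
  ∃ P : Finset (Finset V), P.card = m ∧ (∀ p ∈ P, p.card = 2) ∧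
    (∀ p ∈ P, ∀ q ∈ P, p ≠ q → Disjoint p q) ∧ ∀ p ∈ P, codegPair H p < lam

lemma IsPartialTripleSystem.map_equiv {lam : ℕ} {H : Multiset (Finset V)}
    (hH : IsPartialTripleSystem lam H) (e : V ≃ W) :
    IsPartialTripleSystem lam (H.map (map e.toEmbedding)) := by
  refine ⟨fun t ht => ?_, fun x y hxy => ?_⟩
  · obtain ⟨s, hs, rfl⟩ := Multiset.mem_map.mp ht
    rw [card_map, hH.1 s hs]
  · have hpair : ({x, y} : Finset W) = map e.toEmbedding {e.symm x, e.symm y} := by simp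
    rw [hpair, codegPair_map_equiv]
    exact hH.2 _ _ (e.symm.injective.ne hxy)

lemma HasLeaveMatching.map_equiv {lam m : ℕ} {H : Multiset (Finset V)}
    (hH : HasLeaveMatching lam m H) (e : V ≃ W) :
    HasLeaveMatching lam m (H.map (map e.toEmbedding)) := by
  obtain ⟨P, hcard, hpair, hdisj, hleave⟩ := hH
  refine ⟨P.map (mapEmbedding e.toEmbedding).toEmbedding, by rw [card_map, hcard], ?_, ?_, ?_⟩
  all_goals simp only [mem_map, RelEmbedding.coe_toEmbedding, mapEmbedding_apply]
  · rintro _ ⟨p, hp, rfl⟩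
    rw [card_map, hpair p hp]
  · rintro _ ⟨p, hp, rfl⟩ _ ⟨q, hq, rfl⟩ hpq
    exact (disjoint_map _).mpr (hdisj p hp q hq (ne_of_apply_ne _ hpq))
  · rintro _ ⟨p, hp, rfl⟩
    rw [codegPair_map_equiv]
    exact hleave p hp

end PartialTripleSystem

section Translates

variable {G : Type*} [AddCommGroup G] [DecidableEq G]

lemma card_filter_add_neg_mem (B : Finset G) (d : G) :
    #{x ∈ B | x + -d ∈ B} = #{x ∈ B | x + d ∈ B} := by
  refine card_nbij' (· + -d) (· + d) ?_ ?_ ?_ ?_ <;> intro x hx <;> simp_all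

variable [Fintype G]

def weightedTranslates (B : Finset G) (w : G → ℕ) : Multiset (Finset G) :=
  ∑ i, w i • {i +ᵥ B}

lemma card_weightedTranslates (B : Finset G) (w : G → ℕ) :
    Multiset.card (weightedTranslates B w) = ∑ i, w i := by
  simp [weightedTranslates, Multiset.card_sum]

lemma card_of_mem_weightedTranslates {B t : Finset G} {w : G → ℕ}
    (ht : t ∈ weightedTranslates B w) : t.card = B.card := by
  obtain ⟨i, -, hi⟩ := Multiset.mem_sum.mp ht
  rw [Multiset.mem_nsmul, Multiset.mem_singleton] at hi
  rw [hi.2, card_vadd_finset]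

lemma codegPair_weightedTranslates (B : Finset G) (w : G → ℕ) (p d : G) :
    codegPair (weightedTranslates B w) {p, p + d} = ∑ x ∈ B with x + d ∈ B, w (p - x) := by
  have hmem : ∀ i q, q ∈ i +ᵥ B ↔ q - i ∈ B := fun i q => by
    rw [← neg_vadd_mem_iff, vadd_eq_add, neg_add_eq_sub]
  have hsum : ∑ x ∈ B with x + d ∈ B, w (p - x) =
      ∑ x, if x ∈ B ∧ x + d ∈ B then w (p - x) else 0 := by
    rw [← sum_filter]
    congr 1
    ext x
    simp
  rw [hsum, weightedTranslates, codegPair_sum]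
  refine Fintype.sum_equiv (Equiv.subLeft p) _ _ fun i => ?_
  simp [codegPair_nsmul_singleton, insert_subset_iff, hmem, sub_add_eq_add_sub]

lemma codegPair_weightedTranslates_singleton (B : Finset G) (w : G → ℕ) (p : G) :
    codegPair (weightedTranslates B w) {p} = ∑ x ∈ B, w (p - x) := by
  simpa using codegPair_weightedTranslates B w p 0

end Translates

section Progression

variable {R : Type*} [CommRing R] {a d : R}

lemma mul_ne_zero_of_isUnit_two_three (h2 : IsUnit (2 : R)) (h3 : IsUnit (3 : R)) (ha : a ≠ 0) :
    2 * a ≠ 0 ∧ 3 * a ≠ 0 ∧ 4 * a ≠ 0 := by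
  refine ⟨h2.mul_right_eq_zero.not.mpr ha, h3.mul_right_eq_zero.not.mpr ha, ?_⟩
  rw [show (4 : R) = 2 * 2 by norm_num]
  exact (h2.mul h2).mul_right_eq_zero.not.mpr ha

variable [DecidableEq R]

lemma filter_add_mem_eq_empty_of_subset_progression {B : Finset R} (hB : B ⊆ {0, a, 2 * a})
    (hd : d ≠ 0 ∧ d ≠ a ∧ d ≠ -a ∧ d ≠ 2 * a ∧ d ≠ -(2 * a)) :
    {x ∈ B | x + d ∈ B} = ∅ := by
  refine filter_eq_empty_iff.mpr fun x hx hxd => ?_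
  have := hB hx
  have := hB hxd
  simp only [mem_insert, mem_singleton] at *
  grind

lemma card_progression (h2a : 2 * a ≠ 0) : #({0, a, 2 * a} : Finset R) = 3 :=
  card_eq_three.mpr ⟨0, a, 2 * a, by grind, by grind, by grind, rfl⟩

lemma filter_add_self_mem_progression_subset (h2a : 2 * a ≠ 0) (h3a : 3 * a ≠ 0) :
    {x ∈ ({0, a, 2 * a} : Finset R) | x + a ∈ ({0, a, 2 * a} : Finset R)} ⊆ {0, a} := by
  intro x
  simp only [mem_filter, mem_insert, mem_singleton]
  grind

lemma filter_add_two_mul_mem_progression_subset (h2a : 2 * a ≠ 0) (h3a : 3 * a ≠ 0)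
    (h4a : 4 * a ≠ 0) :
    {x ∈ ({0, a, 2 * a} : Finset R) | x + 2 * a ∈ ({0, a, 2 * a} : Finset R)} ⊆ {0} := by
  intro x
  simp only [mem_filter, mem_insert, mem_singleton]
  grind

lemma card_filter_add_mem_progression_le (h2a : 2 * a ≠ 0) (h3a : 3 * a ≠ 0)
    (h4a : 4 * a ≠ 0) (hd : d ≠ 0) :
    #{x ∈ ({0, a, 2 * a} : Finset R) | x + d ∈ ({0, a, 2 * a} : Finset R)} ≤
      2 * (if a = d ∨ a = -d then 1 else 0) + if 2 * a = d ∨ 2 * a = -d then 1 else 0 := by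
  set B : Finset R := {0, a, 2 * a}
  by_cases h1 : a = d ∨ a = -d
  · have : #{x ∈ B | x + d ∈ B} ≤ 2 := by
      have hle := (card_le_card (filter_add_self_mem_progression_subset h2a h3a)).trans card_le_two
      rcases h1 with h | h
      · rwa [← h]
      · rwa [← card_filter_add_neg_mem, ← h]
    rw [if_pos h1]
    omega
  by_cases h2 : 2 * a = d ∨ 2 * a = -d
  · have : #{x ∈ B | x + d ∈ B} ≤ 1 := by
      have hle := (card_le_card (filter_add_two_mul_mem_progression_subset h2a h3a h4a)).trans
        (card_singleton _).le
      rcases h2 with h | h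
      · rwa [← h]
      · rwa [← card_filter_add_neg_mem, ← h]
    rw [if_pos h2]
    omega
  · rw [not_or] at h1 h2
    rw [filter_add_mem_eq_empty_of_subset_progression subset_rfl ⟨hd, Ne.symm h1.1,
      fun h => h1.2 (by rw [h, neg_neg]), Ne.symm h2.1, fun h => h2.2 (by rw [h, neg_neg])⟩]
    simp

lemma filter_add_self_mem_pair_subset (h2a : 2 * a ≠ 0) :
    {x ∈ ({0, a} : Finset R) | x + a ∈ ({0, a} : Finset R)} ⊆ {0} := by
  intro x
  simp only [mem_filter, mem_insert, mem_singleton]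
  grind

lemma filter_add_two_mul_mem_pair_eq_empty (h2a : 2 * a ≠ 0) (h3a : 3 * a ≠ 0) :
    {x ∈ ({0, a} : Finset R) | x + 2 * a ∈ ({0, a} : Finset R)} = ∅ := by
  refine filter_eq_empty_iff.mpr fun x => ?_
  simp only [mem_insert, mem_singleton]
  grind

lemma filter_add_self_mem_pair_two_mul_eq_empty (h3a : 3 * a ≠ 0) :
    {x ∈ ({0, 2 * a} : Finset R) | x + a ∈ ({0, 2 * a} : Finset R)} = ∅ := by
  refine filter_eq_empty_iff.mpr fun x => ?_
  simp only [mem_insert, mem_singleton]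
  grind

lemma filter_add_two_mul_mem_pair_two_mul_subset (h2a : 2 * a ≠ 0) (h4a : 4 * a ≠ 0) :
    {x ∈ ({0, 2 * a} : Finset R) | x + 2 * a ∈ ({0, 2 * a} : Finset R)} ⊆ {0} := by
  intro x
  simp only [mem_filter, mem_insert, mem_singleton]
  grind

end Progression

lemma ZMod.natCast_eq_natCast_iff_of_lt {n a b : ℕ} (ha : a < n) (hb : b < n) :
    (a : ZMod n) = b ↔ a = b := by
  rw [ZMod.natCast_eq_natCast_iff', Nat.mod_eq_of_lt ha, Nat.mod_eq_of_lt hb]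

lemma eq_of_natCast_eq_or_eq_neg {n a b : ℕ} (hab : a + b < n)
    (h : (a : ZMod n) = b ∨ (a : ZMod n) = -b) : a = b := by
  rcases h with h | h
  · exact (ZMod.natCast_eq_natCast_iff_of_lt (by omega) (by omega)).mp h
  · have hsum : ((a + b : ℕ) : ZMod n) = ((0 : ℕ) : ZMod n) := by push_cast; rw [h]; ring
    have := (ZMod.natCast_eq_natCast_iff_of_lt hab (by omega)).mp hsum
    omega

lemma card_filter_mul_natCast_eq_or_eq_neg_le_one {n : ℕ} {c : ZMod n} (hc : IsUnit c)
    (d : ZMod n) {A : Finset ℕ} (hA : ∀ a ∈ A, ∀ b ∈ A, a + b < n) :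
    #{a ∈ A | c * ((a : ℕ) : ZMod n) = d ∨ c * ((a : ℕ) : ZMod n) = -d} ≤ 1 := by
  refine card_le_one.mpr fun a ha b hb => ?_
  rw [mem_filter] at ha hb
  refine eq_of_natCast_eq_or_eq_neg (hA a ha.1 b hb.1) ?_
  have hcancel : ∀ x y : ZMod n, c * x = c * y → x = y := fun x y => hc.mul_left_cancel
  rcases ha.2 with h | h <;> rcases hb.2 with h' | h'
  · exact Or.inl (hcancel _ _ (h.trans h'.symm))
  · exact Or.inr (hcancel _ _ (by rw [h, mul_neg, h', neg_neg]))
  · exact Or.inr (hcancel _ _ (by rw [h, mul_neg, h']))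
  · exact Or.inl (hcancel _ _ (h.trans h'.symm))

section ProgressionTriples

variable {k : ℕ}

lemma isUnit_two_zmod : IsUnit (2 : ZMod (6 * k + 1)) := by
  have := (ZMod.isUnit_iff_coprime 2 (6 * k + 1)).mpr
    (Nat.coprime_two_left.mpr ⟨3 * k, by ring⟩)
  simpa using this

lemma isUnit_three_zmod : IsUnit (3 : ZMod (6 * k + 1)) := by
  have := (ZMod.isUnit_iff_coprime 3 (6 * k + 1)).mpr
    ((Nat.Prime.coprime_iff_not_dvd Nat.prime_three).mpr (by omega))
  simpa using this

lemma natCast_ne_zero_of_pos_of_lt {a : ℕ} (h0 : 0 < a) (ha : a < 6 * k + 1) :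
    (a : ZMod (6 * k + 1)) ≠ 0 := by
  rw [← Nat.cast_zero, Ne, ZMod.natCast_eq_natCast_iff_of_lt ha (by omega)]
  omega

def progressionTriples (k : ℕ) : Multiset (Finset (ZMod (6 * k + 1))) :=
  ∑ a ∈ Icc 2 (3 * k),
    weightedTranslates {0, (a : ZMod (6 * k + 1)), 2 * (a : ZMod (6 * k + 1))} fun _ => 2

lemma codegPair_progressionTriples_le (p : ZMod (6 * k + 1)) {d : ZMod (6 * k + 1)}
    (hd : d ≠ 0) :
    codegPair (progressionTriples k) {p, p + d} ≤
      2 * (2 * #{a ∈ Icc 2 (3 * k) | ((a : ℕ) : ZMod (6 * k + 1)) = d ∨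
          (a : ZMod (6 * k + 1)) = -d} +
        #{a ∈ Icc 2 (3 * k) | 2 * ((a : ℕ) : ZMod (6 * k + 1)) = d ∨
          2 * (a : ZMod (6 * k + 1)) = -d}) := by
  simp only [progressionTriples, codegPair_sum, codegPair_weightedTranslates, sum_const,
    smul_eq_mul]
  rw [card_filter, card_filter, mul_add, Finset.mul_sum, Finset.mul_sum, Finset.mul_sum,
    ← sum_add_distrib]
  refine sum_le_sum fun a ha => ?_
  rw [mem_Icc] at ha
  obtain ⟨h2a, h3a, h4a⟩ := mul_ne_zero_of_isUnit_two_three isUnit_two_zmod isUnit_three_zmod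
    (natCast_ne_zero_of_pos_of_lt (k := k) (a := a) (by omega) (by omega))
  have := card_filter_add_mem_progression_le h2a h3a h4a hd
  omega

lemma zmod_one_ne_zero (hk : 1 ≤ k) : (1 : ZMod (6 * k + 1)) ≠ 0 := by
  simpa using natCast_ne_zero_of_pos_of_lt (k := k) (a := 1) one_pos (by omega)

lemma two_three_four_mul_one_ne_zero (hk : 1 ≤ k) :
    (2 : ZMod (6 * k + 1)) * 1 ≠ 0 ∧ (3 : ZMod (6 * k + 1)) * 1 ≠ 0 ∧
      (4 : ZMod (6 * k + 1)) * 1 ≠ 0 :=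
  mul_ne_zero_of_isUnit_two_three isUnit_two_zmod isUnit_three_zmod (zmod_one_ne_zero hk)

lemma add_lt_of_mem_Icc : ∀ a ∈ Icc 2 (3 * k), ∀ b ∈ Icc 2 (3 * k), a + b < 6 * k + 1 := by
  simp only [mem_Icc]
  omega

lemma not_mul_natCast_eq_or_eq_neg {c : ZMod (6 * k + 1)} (hc : IsUnit c) {a : ℕ}
    (ha : a ∈ Icc 2 (3 * k)) :
    ¬(c * (a : ZMod (6 * k + 1)) = c ∨ c * (a : ZMod (6 * k + 1)) = -c) := fun h => by
  have h1 : ((a : ℕ) : ZMod (6 * k + 1)) = (1 : ℕ) ∨ (a : ZMod (6 * k + 1)) = -(1 : ℕ) := by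
    rw [Nat.cast_one]
    refine h.imp (fun h => hc.mul_left_cancel ?_) fun h => hc.mul_left_cancel ?_
    · rw [h, mul_one]
    · rw [h, mul_neg, mul_one]
  rw [mem_Icc] at ha
  have := eq_of_natCast_eq_or_eq_neg (by omega) h1
  omega

lemma codegPair_progressionTriples_le_six (p : ZMod (6 * k + 1)) {d : ZMod (6 * k + 1)}
    (hd : d ≠ 0) : codegPair (progressionTriples k) {p, p + d} ≤ 6 := by
  have hA := add_lt_of_mem_Icc (k := k)
  have h1 := card_filter_mul_natCast_eq_or_eq_neg_le_one isUnit_one d hA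
  have h2 := card_filter_mul_natCast_eq_or_eq_neg_le_one isUnit_two_zmod d hA
  simp only [one_mul] at h1
  have := codegPair_progressionTriples_le p hd
  omega

lemma codegPair_progressionTriples_add_one_le (hk : 1 ≤ k) (p : ZMod (6 * k + 1)) :
    codegPair (progressionTriples k) {p, p + 1} ≤ 2 := by
  have h1 : #{a ∈ Icc 2 (3 * k) | ((a : ℕ) : ZMod (6 * k + 1)) = 1 ∨
      (a : ZMod (6 * k + 1)) = -1} = 0 :=
    card_eq_zero.mpr (filter_eq_empty_iff.mpr fun a ha => by
      simpa using not_mul_natCast_eq_or_eq_neg isUnit_one ha)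
  have h2 :=
    card_filter_mul_natCast_eq_or_eq_neg_le_one isUnit_two_zmod 1 (add_lt_of_mem_Icc (k := k))
  have := codegPair_progressionTriples_le p (zmod_one_ne_zero hk)
  omega

lemma codegPair_progressionTriples_add_two_le (hk : 1 ≤ k) (p : ZMod (6 * k + 1)) :
    codegPair (progressionTriples k) {p, p + 2} ≤ 4 := by
  have h1 :=
    card_filter_mul_natCast_eq_or_eq_neg_le_one isUnit_one 2 (add_lt_of_mem_Icc (k := k))
  have h2 : #{a ∈ Icc 2 (3 * k) | 2 * ((a : ℕ) : ZMod (6 * k + 1)) = 2 ∨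
      2 * (a : ZMod (6 * k + 1)) = -2} = 0 :=
    card_eq_zero.mpr (filter_eq_empty_iff.mpr fun a ha =>
      not_mul_natCast_eq_or_eq_neg isUnit_two_zmod ha)
  simp only [one_mul] at h1
  have := codegPair_progressionTriples_le p (two_three_four_mul_one_ne_zero hk).1
  rw [mul_one] at this
  omega

end ProgressionTriples

section Gaps

variable {k : ℕ}

def gap (k : ℕ) : Finset (ZMod (6 * k + 1)) :=
  (range (2 * k)).image fun j => ((3 * j + 1 : ℕ) : ZMod (6 * k + 1))

lemma natCast_mem_gap_iff {j : ℕ} (hj : j < 6 * k + 1) :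
    (j : ZMod (6 * k + 1)) ∈ gap k ↔ j % 3 = 1 := by
  simp only [gap, mem_image, mem_range]
  constructor
  · rintro ⟨i, hi, h⟩
    rw [ZMod.natCast_eq_natCast_iff_of_lt (by omega) hj] at h
    omega
  · exact fun h => ⟨j / 3, by omega, by congr 1; omega⟩

lemma card_gap : #(gap k) = 2 * k := by
  rw [gap, card_image_of_injOn, card_range]
  intro i hi j hj h
  simp only [coe_range, Set.mem_Iio] at hi hj
  have := (ZMod.natCast_eq_natCast_iff_of_lt (by omega) (by omega)).mp h
  omega

lemma add_one_notMem_gap {i : ZMod (6 * k + 1)} (hi : i ∈ gap k) : i + 1 ∉ gap k := by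
  obtain ⟨j, hj, rfl⟩ := mem_image.mp hi
  rw [mem_range] at hj
  rw [show ((3 * j + 1 : ℕ) : ZMod (6 * k + 1)) + 1 = ((3 * j + 2 : ℕ) : ZMod (6 * k + 1)) by
    push_cast; ring, natCast_mem_gap_iff (by omega)]
  omega

lemma add_two_notMem_gap {i : ZMod (6 * k + 1)} (hi : i ∈ gap k) : i + 2 ∉ gap k := by
  obtain ⟨j, hj, rfl⟩ := mem_image.mp hi
  rw [mem_range] at hj
  rw [show ((3 * j + 1 : ℕ) : ZMod (6 * k + 1)) + 2 = ((3 * j + 3 : ℕ) : ZMod (6 * k + 1)) by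
    push_cast; ring, natCast_mem_gap_iff (by omega)]
  omega

lemma neg_two_notMem_gap (hk : 1 ≤ k) : -2 ∉ gap k := by
  have h : ((6 * k - 1 : ℕ) : ZMod (6 * k + 1)) = -2 := by
    rw [eq_neg_iff_add_eq_zero, ← ZMod.natCast_self (6 * k + 1), ← Nat.cast_two (R := ZMod _),
      ← Nat.cast_add]
    congr 1
    omega
  rw [← h, natCast_mem_gap_iff (by omega)]
  omega

lemma neg_one_notMem_gap : -1 ∉ gap k := by
  have h : ((6 * k : ℕ) : ZMod (6 * k + 1)) = -1 := by
    rw [eq_neg_iff_add_eq_zero, ← Nat.cast_add_one, ZMod.natCast_self]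
  rw [← h, natCast_mem_gap_iff (by omega)]
  omega

lemma zero_notMem_gap : 0 ∉ gap k := by
  rw [← Nat.cast_zero, natCast_mem_gap_iff (by omega)]
  omega

def gapIndicator (k : ℕ) (i : ZMod (6 * k + 1)) : ℕ := if i ∈ gap k then 1 else 0

lemma gapIndicator_le_one (i : ZMod (6 * k + 1)) : gapIndicator k i ≤ 1 := by
  unfold gapIndicator; split_ifs <;> omega

lemma sum_gapIndicator : ∑ i, gapIndicator k i = 2 * k := by
  simp [gapIndicator, card_gap]

lemma gapIndicator_window_le_one (p : ZMod (6 * k + 1)) :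
    gapIndicator k (p - 2) + gapIndicator k (p - 1) + gapIndicator k p ≤ 1 := by
  have h21 := add_one_notMem_gap (k := k) (i := p - 2)
  have h22 := add_two_notMem_gap (k := k) (i := p - 2)
  have h11 := add_one_notMem_gap (k := k) (i := p - 1)
  rw [show p - 2 + 1 = p - 1 by ring] at h21
  rw [show p - 2 + 2 = p by ring] at h22
  rw [show p - 1 + 1 = p by ring] at h11
  unfold gapIndicator
  split_ifs <;> simp_all

lemma gapIndicator_window_zero (hk : 1 ≤ k) :
    gapIndicator k (0 - 2) + gapIndicator k (0 - 1) + gapIndicator k 0 = 0 := by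
  simp [gapIndicator, neg_two_notMem_gap hk, neg_one_notMem_gap, zero_notMem_gap]

end Gaps

section TripleSystem

variable {k : ℕ}

def consecutiveTriples (k : ℕ) : Multiset (Finset (ZMod (6 * k + 1))) :=
  weightedTranslates {0, 1, 2} fun i => 1 - gapIndicator k i

/-- A link `{i, i+1}` is repeated for each of the gaps `i - 1`, `i` whose consecutive triple
contains it, and `{i, i+2}` for the gap `i`. -/
def apexLinks (k : ℕ) : Multiset (Finset (ZMod (6 * k + 1))) :=
  weightedTranslates {0, 1} (fun i => 1 + gapIndicator k (i - 1) + gapIndicator k i) +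
    weightedTranslates {0, 2} fun i => 1 + gapIndicator k i

/-- `none` is the point `∞`, and a link `e` stands for the triple `insertNone e = {∞} ∪ e`. -/
def tripleSystem (k : ℕ) : Multiset (Finset (Option (ZMod (6 * k + 1)))) :=
  (progressionTriples k + consecutiveTriples k).map (map Function.Embedding.some) +
    (apexLinks k).map insertNone

lemma codegPair_tripleSystem_some (p q : ZMod (6 * k + 1)) :
    codegPair (tripleSystem k) {some p, some q} = codegPair (progressionTriples k) {p, q} +
      codegPair (consecutiveTriples k) {p, q} + codegPair (apexLinks k) {p, q} := by
  rw [tripleSystem, codegPair_add_s17, codegPair_map (s' := {p, q}), codegPair_map (s' := {p, q}),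
    codegPair_add_s17]
  all_goals intro t; simp [insert_subset_iff]

lemma codegPair_tripleSystem_none (hk : 1 ≤ k) (p : ZMod (6 * k + 1)) :
    codegPair (tripleSystem k) {none, some p} =
      4 + 2 * (gapIndicator k (p - 2) + gapIndicator k (p - 1) + gapIndicator k p) := by
  rw [tripleSystem, codegPair_add_s17, codegPair_map_eq_zero, codegPair_map (s' := {p}), apexLinks,
    codegPair_add_s17, codegPair_weightedTranslates_singleton, codegPair_weightedTranslates_singleton]
  · obtain ⟨h2, -, -⟩ := two_three_four_mul_one_ne_zero hk
    rw [mul_one] at h2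
    rw [sum_pair (zmod_one_ne_zero hk).symm, sum_pair h2.symm, sub_zero, sub_sub,
      one_add_one_eq_two]
    ring
  all_goals intro t; simp [insert_subset_iff]

lemma codegPair_tripleSystem_add_one_le (hk : 1 ≤ k) (p : ZMod (6 * k + 1)) :
    codegPair (tripleSystem k) {some p, some (p + 1)} ≤ 5 := by
  obtain ⟨h2, h3, -⟩ := two_three_four_mul_one_ne_zero hk
  have hcons := sum_le_sum_of_subset (f := fun x => 1 - gapIndicator k (p - x))
    (filter_add_self_mem_progression_subset h2 h3)
  have hlink := sum_le_sum_of_subset (f := fun x => 1 + gapIndicator k (p - x - 1) +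
    gapIndicator k (p - x)) (filter_add_self_mem_pair_subset h2)
  have hfar := filter_add_self_mem_pair_two_mul_eq_empty (a := (1 : ZMod (6 * k + 1))) h3
  simp only [mul_one] at hcons hlink hfar h2
  rw [sum_pair (zmod_one_ne_zero hk).symm] at hcons
  rw [sum_singleton] at hlink
  rw [codegPair_tripleSystem_some, consecutiveTriples, apexLinks, codegPair_add_s17,
    codegPair_weightedTranslates, codegPair_weightedTranslates, codegPair_weightedTranslates,
    hfar, sum_empty]
  have := codegPair_progressionTriples_add_one_le hk p
  have := gapIndicator_le_one (k := k) p
  have := gapIndicator_le_one (k := k) (p - 1)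
  simp only [sub_zero] at hcons hlink ⊢
  omega

lemma codegPair_tripleSystem_add_two_le (hk : 1 ≤ k) (p : ZMod (6 * k + 1)) :
    codegPair (tripleSystem k) {some p, some (p + 2)} ≤ 6 := by
  obtain ⟨h2, h3, h4⟩ := two_three_four_mul_one_ne_zero hk
  have hcons := sum_le_sum_of_subset (f := fun x => 1 - gapIndicator k (p - x))
    (filter_add_two_mul_mem_progression_subset h2 h3 h4)
  have hlink := sum_le_sum_of_subset (f := fun x => 1 + gapIndicator k (p - x))
    (filter_add_two_mul_mem_pair_two_mul_subset h2 h4)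
  have hfar := filter_add_two_mul_mem_pair_eq_empty h2 h3
  simp only [mul_one, sum_singleton, sub_zero] at hcons hlink hfar
  rw [codegPair_tripleSystem_some, consecutiveTriples, apexLinks, codegPair_add_s17,
    codegPair_weightedTranslates, codegPair_weightedTranslates, codegPair_weightedTranslates,
    hfar, sum_empty]
  have := codegPair_progressionTriples_add_two_le hk p
  have := gapIndicator_le_one (k := k) p
  omega

lemma codegPair_tripleSystem_le_six_of_ne (p : ZMod (6 * k + 1))
    {d : ZMod (6 * k + 1)} (hd : d ≠ 0 ∧ d ≠ 1 ∧ d ≠ -1 ∧ d ≠ 2 ∧ d ≠ -2) :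
    codegPair (tripleSystem k) {some p, some (p + d)} ≤ 6 := by
  have hd' : d ≠ 0 ∧ d ≠ 1 ∧ d ≠ -1 ∧ d ≠ 2 * 1 ∧ d ≠ -(2 * 1) := by
    simpa only [mul_one] using hd
  have hsub : ({0, 1} : Finset (ZMod (6 * k + 1))) ⊆ {0, 1, 2 * 1} ∧
      ({0, 2 * 1} : Finset (ZMod (6 * k + 1))) ⊆ {0, 1, 2 * 1} := by
    constructor <;> intro x <;> simp only [mem_insert, mem_singleton] <;> tauto
  have hcons := filter_add_mem_eq_empty_of_subset_progression subset_rfl hd'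
  have hlink₁ := filter_add_mem_eq_empty_of_subset_progression hsub.1 hd'
  have hlink₂ := filter_add_mem_eq_empty_of_subset_progression hsub.2 hd'
  simp only [mul_one] at hcons hlink₁ hlink₂
  rw [codegPair_tripleSystem_some, consecutiveTriples, apexLinks, codegPair_add_s17,
    codegPair_weightedTranslates, codegPair_weightedTranslates, codegPair_weightedTranslates,
    hcons, hlink₁, hlink₂, sum_empty, sum_empty, sum_empty]
  have := codegPair_progressionTriples_le_six p hd.1
  omega

lemma codegPair_tripleSystem_some_le_six (hk : 1 ≤ k) {p q : ZMod (6 * k + 1)} (hpq : p ≠ q) :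
    codegPair (tripleSystem k) {some p, some q} ≤ 6 := by
  obtain ⟨d, rfl⟩ : ∃ d, q = p + d := ⟨q - p, by ring⟩
  have hd0 : d ≠ 0 := fun h => hpq (by rw [h, add_zero])
  by_cases h1 : d = 1
  · subst h1; exact (codegPair_tripleSystem_add_one_le hk p).trans (by omega)
  by_cases h1' : d = -1
  · subst h1'
    have := codegPair_tripleSystem_add_one_le hk (p + -1)
    rw [neg_add_cancel_right] at this
    rw [pair_comm]; omega
  by_cases h2 : d = 2
  · subst h2; exact codegPair_tripleSystem_add_two_le hk p
  by_cases h2' : d = -2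
  · subst h2'
    have := codegPair_tripleSystem_add_two_le hk (p + -2)
    rwa [neg_add_cancel_right, pair_comm] at this
  exact codegPair_tripleSystem_le_six_of_ne p ⟨hd0, h1, h1', h2, h2'⟩

lemma card_of_mem_tripleSystem (hk : 1 ≤ k) {t : Finset (Option (ZMod (6 * k + 1)))}
    (ht : t ∈ tripleSystem k) : t.card = 3 := by
  obtain ⟨h2, -, -⟩ := two_three_four_mul_one_ne_zero hk
  simp only [tripleSystem, apexLinks, Multiset.mem_add, Multiset.mem_map] at ht
  rcases ht with ⟨s, hs | hs, rfl⟩ | ⟨s, hs | hs, rfl⟩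
  · obtain ⟨a, ha, hs⟩ := Multiset.mem_sum.mp hs
    rw [mem_Icc] at ha
    rw [card_map, card_of_mem_weightedTranslates hs]
    exact card_progression (mul_ne_zero_of_isUnit_two_three isUnit_two_zmod isUnit_three_zmod
      (natCast_ne_zero_of_pos_of_lt (k := k) (a := a) (by omega) (by omega))).1
  · rw [card_map, card_of_mem_weightedTranslates hs]
    simpa using card_progression h2
  · rw [card_insertNone, card_of_mem_weightedTranslates hs, card_pair (zmod_one_ne_zero hk).symm]
  · rw [mul_one] at h2
    rw [card_insertNone, card_of_mem_weightedTranslates hs, card_pair h2.symm]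

lemma isPartialTripleSystem_tripleSystem (hk : 1 ≤ k) :
    IsPartialTripleSystem 6 (tripleSystem k) := by
  have hnone (p : ZMod (6 * k + 1)) : codegPair (tripleSystem k) {none, some p} ≤ 6 := by
    rw [codegPair_tripleSystem_none hk]
    have := gapIndicator_window_le_one (k := k) p
    omega
  refine ⟨fun t => card_of_mem_tripleSystem hk, ?_⟩
  rintro (_ | p) (_ | q) hne
  · exact absurd rfl hne
  · exact hnone q
  · rw [pair_comm]; exact hnone p
  · exact codegPair_tripleSystem_some_le_six hk (Option.some_injective _ |>.ne_iff.mp hne)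

lemma card_tripleSystem (hk : 1 ≤ k) :
    Multiset.card (tripleSystem k) = 36 * k ^ 2 + 16 * k + 1 := by
  have hshift : ∑ i : ZMod (6 * k + 1), gapIndicator k (i - 1) = 2 * k :=
    ((Equiv.subRight 1).sum_comp (gapIndicator k)).trans sum_gapIndicator
  have hcons : ∑ i : ZMod (6 * k + 1), (1 - gapIndicator k i) = 4 * k + 1 := by
    rw [sum_tsub_distrib _ fun i _ => gapIndicator_le_one i, sum_gapIndicator, sum_const,
      card_univ, ZMod.card, smul_eq_mul, mul_one]
    omega
  simp only [tripleSystem, apexLinks, consecutiveTriples, progressionTriples, Multiset.card_add,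
    Multiset.card_map, Multiset.card_sum, card_weightedTranslates, sum_add_distrib, sum_const,
    hshift, hcons, sum_gapIndicator]
  simp only [Nat.card_Icc, card_univ, ZMod.card, smul_eq_mul, mul_one]
  obtain ⟨j, rfl⟩ : ∃ j, k = j + 1 := ⟨k - 1, by omega⟩
  rw [show 3 * (j + 1) + 1 - 2 = 3 * j + 2 by omega]
  ring

end TripleSystem

section Matching

variable {k : ℕ}

def vertexOf (k : ℕ) : ℕ → Option (ZMod (6 * k + 1))
  | 0 => none
  | m + 1 => some m

lemma vertexOf_injOn : Set.InjOn (vertexOf k) (Set.Iio (6 * k + 2)) := by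
  rintro (_ | m) hm (_ | m') hm' h <;> simp only [vertexOf, reduceCtorEq, Option.some.injEq] at h
  · rfl
  · simp only [Set.mem_Iio] at hm hm'
    rw [(ZMod.natCast_eq_natCast_iff_of_lt (by omega) (by omega)).mp h]

def matchingPair (k j : ℕ) : Finset (Option (ZMod (6 * k + 1))) :=
  ({2 * j, 2 * j + 1} : Finset ℕ).image (vertexOf k)

lemma eq_of_mem_matchingPair {j j' : ℕ} (hj : j < 3 * k + 1) (hj' : j' < 3 * k + 1)
    {x : Option (ZMod (6 * k + 1))} (hx : x ∈ matchingPair k j) (hx' : x ∈ matchingPair k j') :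
    j = j' := by
  simp only [matchingPair, mem_image, mem_insert, mem_singleton] at hx hx'
  obtain ⟨m, hm, rfl⟩ := hx
  obtain ⟨m', hm', h⟩ := hx'
  have := vertexOf_injOn (k := k) (x₁ := m') (by simp only [Set.mem_Iio]; omega)
    (by simp only [Set.mem_Iio]; omega) h
  omega

lemma card_matchingPair {j : ℕ} (hj : j < 3 * k + 1) : (matchingPair k j).card = 2 := by
  rw [matchingPair, card_image_of_injOn, card_pair (by omega)]
  refine vertexOf_injOn.mono fun m hm => ?_
  simp only [coe_insert, coe_singleton, Set.mem_insert_iff, Set.mem_singleton_iff] at hm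
  simp only [Set.mem_Iio]
  omega

lemma codegPair_tripleSystem_matchingPair_lt (hk : 1 ≤ k) (j : ℕ) :
    codegPair (tripleSystem k) (matchingPair k j) < 6 := by
  rcases j with _ | i
  · have hpair : matchingPair k 0 = {none, some 0} := by simp [matchingPair, vertexOf]
    rw [hpair, codegPair_tripleSystem_none hk, gapIndicator_window_zero hk]
    omega
  · have hpair : matchingPair k (i + 1) = {some ((2 * i + 1 : ℕ) : ZMod (6 * k + 1)),
        some (((2 * i + 1 : ℕ) : ZMod (6 * k + 1)) + 1)} := by
      rw [matchingPair, show 2 * (i + 1) = 2 * i + 1 + 1 by ring, image_insert, image_singleton]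
      simp only [vertexOf]
      push_cast
      ring_nf
    rw [hpair]
    exact (codegPair_tripleSystem_add_one_le hk _).trans_lt (by omega)

def leaveMatching (k : ℕ) : Finset (Finset (Option (ZMod (6 * k + 1)))) :=
  (range (3 * k + 1)).image (matchingPair k)

lemma hasLeaveMatching_tripleSystem (hk : 1 ≤ k) :
    HasLeaveMatching 6 (3 * k + 1) (tripleSystem k) := by
  have hself (j : ℕ) : vertexOf k (2 * j) ∈ matchingPair k j :=
    mem_image_of_mem _ (mem_insert_self _ _)
  refine ⟨leaveMatching k, ?_, ?_, ?_, ?_⟩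
  · rw [leaveMatching, card_image_of_injOn, card_range]
    intro j hj j' hj' h
    simp only [coe_range, Set.mem_Iio] at hj hj'
    exact eq_of_mem_matchingPair hj hj' (hself j) (h ▸ hself j)
  all_goals simp only [leaveMatching, mem_image, mem_range]
  · rintro _ ⟨j, hj, rfl⟩
    exact card_matchingPair hj
  · rintro _ ⟨j, hj, rfl⟩ _ ⟨j', hj', rfl⟩ hne
    exact disjoint_left.mpr fun x hx hx' => hne (congrArg _ (eq_of_mem_matchingPair hj hj' hx hx'))
  · rintro _ ⟨j, -, rfl⟩
    exact codegPair_tripleSystem_matchingPair_lt hk j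

end Matching

lemma choose_two_six_mul_add_two (k : ℕ) : (6 * k + 2).choose 2 = (3 * k + 1) * (6 * k + 1) := by
  rw [Nat.choose_two_right, show 6 * k + 2 - 1 = 6 * k + 1 by omega]
  exact Nat.div_eq_of_eq_mul_left two_pos (by ring)

/-- for `ν ≡ 2 (mod 6)`, `ν ≥ 8`, there is a `PTS(ν, 6)` with exactly
`(6·C(ν,2) − ν − 1)/3` triples whose leave contains `ν/2` pairwise disjoint edges. -/
theorem stmt_17 (ν : ℕ) (hge : 8 ≤ ν) (hmod : ν % 6 = 2) :
    ∃ H : Multiset (Finset (Fin ν)),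
      (∀ t ∈ H, t.card = 3) ∧
      (∀ x y : Fin ν, x ≠ y → codegPair H {x, y} ≤ 6) ∧
      Multiset.card H = (6 * ν.choose 2 - ν - 1) / 3 ∧
      ∃ P : Finset (Finset (Fin ν)),
        P.card = ν / 2 ∧
        (∀ p ∈ P, p.card = 2) ∧
        (∀ p ∈ P, ∀ q ∈ P, p ≠ q → Disjoint p q) ∧
        (∀ p ∈ P, codegPair H p < 6) := by
  obtain ⟨k, rfl⟩ : ∃ k, ν = 6 * k + 2 := ⟨ν / 6, by omega⟩
  have hk : 1 ≤ k := by omega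
  have hcard : Fintype.card (Option (ZMod (6 * k + 1))) = 6 * k + 2 := by simp
  let e := Fintype.equivFinOfCardEq hcard
  obtain ⟨htriple, hcodeg⟩ := (isPartialTripleSystem_tripleSystem hk).map_equiv e
  refine ⟨_, htriple, hcodeg, ?_, ?_⟩
  · rw [Multiset.card_map, card_tripleSystem hk, choose_two_six_mul_add_two]
    have : 6 * ((3 * k + 1) * (6 * k + 1)) = (36 * k ^ 2 + 16 * k + 1) * 3 + (6 * k + 2) + 1 := by
      ring
    omega
  · rw [show (6 * k + 2) / 2 = 3 * k + 1 by omega]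
    exact (hasLeaveMatching_tripleSystem hk).map_equiv e
end
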